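/- Let l1, l2, l3 > 0 with l1 + l2 + l3 = 1, l1 > 1/2, and 1 − l1 < τ ≤ 1/2, and let F = F_τ^{l1,l2,l3}. Then: (i) F²(x) = x for every x ∈ (0, l1+τ−1) ∪ (τ, l1); (ii) for all but finitely many x ∈ (l1, 1), F²(x) ∈ (l1, 1) and F²(x) − l1 ≡ (x − l1) + l3 (mod 1−l1); in other words, after gluing the endpoints of (l1, 1) into a circle of length l2+l3 and rescaling to unit length, F² acts on it as the rotation by κ = l3/(l2+l3); (iii) for all but finitely many x outside (0, l1+τ−1) ∪ (τ, l1), F²(x) ≠ x. -/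

import Mathlib

open Set

noncomputable section

local instance : Fact ((0:ℝ) < 1) := ⟨one_pos⟩

/-- Representative in `[0,1)` of a point of the circle `ℝ/ℤ`. -/
def rep (x : AddCircle (1:ℝ)) : ℝ := (AddCircle.equivIco 1 0 x : ℝ)

/-- Projection `ℝ → ℝ/ℤ`. -/
def toCirc (t : ℝ) : AddCircle (1:ℝ) := (t : AddCircle (1:ℝ))

/-- The fully flipped 3-interval exchange transformation `F_τ^{l1,l2,l3}`
(it depends only on `l1`, `l2`, `τ`, since `l3 = 1 - l1 - l2`). -/
def FF (l1 l2 τ : ℝ) (x : AddCircle (1:ℝ)) : AddCircle (1:ℝ) :=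
  if rep x < l1 then toCirc (l1 - rep x + τ)
  else if rep x < l1 + l2 then toCirc (2*l1 + l2 - rep x + τ)
  else toCirc (l1 + l2 + 1 - rep x + τ)

lemma rep_toCirc {t : ℝ} (h0 : 0 ≤ t) (h1 : t < 1) : rep (toCirc t) = t := by
  unfold rep toCirc
  rw [show ((t:ℝ) : AddCircle (1:ℝ)) = QuotientAddGroup.mk t from rfl,
    AddCircle.coe_equivIco_mk_apply]
  simp [Int.fract_eq_self.2 ⟨h0, h1⟩]

lemma toCirc_sub_one (t : ℝ) : toCirc (t - 1) = toCirc t := by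
  unfold toCirc
  conv_rhs => rw [show (t : ℝ) = (t - 1) + 1 by ring]
  rw [AddCircle.coe_add_period 1 (t-1)]

lemma toCirc_rep (x : AddCircle (1:ℝ)) : toCirc (rep x) = x :=
  (AddCircle.equivIco (1:ℝ) 0).symm_apply_apply x

lemma rep_mem (x : AddCircle (1:ℝ)) : rep x ∈ Ico (0:ℝ) 1 := by
  have := (AddCircle.equivIco (1:ℝ) 0 x).2
  simpa [rep] using this

/-- Obtuse case `l1 > 1/2`, `1 - l1 < τ ≤ 1/2`: `F²` is the identity on the two arcs
`(0, l1+τ-1)` and `(τ, l1)`, and on the arc `(l1, 1)` (glued into a circle of length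
`l2 + l3 = 1 - l1`) it acts as the rotation by `l3`; outside the two `2`-periodic arcs,
`F²` has (up to finitely many points) no fixed point. -/
theorem statement10 (l1 l2 l3 τ : ℝ)
    (h1 : 0 < l1) (h2 : 0 < l2) (h3 : 0 < l3) (hsum : l1 + l2 + l3 = 1)
    (hl1 : 1/2 < l1) (hτ1 : 1 - l1 < τ) (hτ2 : τ ≤ 1/2) :
    -- (i) F² = id on (0, l1+τ-1) ∪ (τ, l1)
    (∀ x ∈ Ioo (0:ℝ) (l1 + τ - 1) ∪ Ioo τ l1,
        FF l1 l2 τ (FF l1 l2 τ (toCirc x)) = toCirc x) ∧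
    -- (ii) on (l1, 1), F² is the rotation by l3 of the circle of length 1 - l1,
    -- away from finitely many points
    {x ∈ Ioo l1 (1:ℝ) |
        ¬ (FF l1 l2 τ (FF l1 l2 τ (toCirc x)) ∈ toCirc '' Ioo l1 1 ∧
           ∃ m : ℤ, rep (FF l1 l2 τ (FF l1 l2 τ (toCirc x))) - l1
             = (x - l1) + l3 - (m : ℝ) * (1 - l1))}.Finite ∧
    -- (iii) away from finitely many points, F² has no fixed point outside
    -- (0, l1+τ-1) ∪ (τ, l1)
    {x : AddCircle (1:ℝ) |
        x ∉ toCirc '' Ioo (0:ℝ) (l1 + τ - 1) ∪ toCirc '' Ioo τ l1 ∧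
        FF l1 l2 τ (FF l1 l2 τ x) = x}.Finite := by
  have hl1lt1 : l1 < 1 := by linarith
  have hτpos : 0 < τ := by linarith
  have hF1 : ∀ t : ℝ, 0 ≤ t → t < l1 → FF l1 l2 τ (toCirc t) = toCirc (l1 - t + τ) := by
    intro t h0 hlt
    unfold FF
    rw [rep_toCirc h0 (hlt.trans hl1lt1), if_pos hlt]
  have hF2 : ∀ t : ℝ, l1 ≤ t → t < l1 + l2 →
      FF l1 l2 τ (toCirc t) = toCirc (2*l1 + l2 - t + τ) := by
    intro t h0 hlt
    unfold FF
    rw [rep_toCirc (by linarith) (by linarith), if_neg (by linarith), if_pos hlt]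
  have hF3 : ∀ t : ℝ, l1 + l2 ≤ t → t < 1 →
      FF l1 l2 τ (toCirc t) = toCirc (l1 + l2 + 1 - t + τ) := by
    intro t h0 hlt
    unfold FF
    rw [rep_toCirc (by linarith) hlt, if_neg (by linarith), if_neg (by linarith)]
  refine ⟨?_, ?_, ?_⟩
  · -- part (i)
    rintro x (⟨hx1, hx2⟩ | ⟨hx1, hx2⟩)
    · rw [hF1 x hx1.le (by linarith), ← toCirc_sub_one (l1 - x + τ),
        hF1 (l1 - x + τ - 1) (by linarith) (by linarith),
        show l1 - (l1 - x + τ - 1) + τ = x + 1 by ring,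
        ← toCirc_sub_one (x + 1)]
      congr 1; ring
    · rw [hF1 x (by linarith) hx2, hF1 (l1 - x + τ) (by linarith) (by linarith)]
      congr 1; ring
  · -- part (ii)
    apply Set.Finite.subset (Set.finite_singleton (l1 + l2))
    rintro x ⟨⟨hx1, hx2⟩, hxP⟩
    by_contra hne
    simp only [Set.mem_singleton_iff] at hne
    apply hxP
    rcases lt_or_gt_of_ne hne with hlt | hgt
    · have hcomp : FF l1 l2 τ (FF l1 l2 τ (toCirc x)) = toCirc (x + l3) := by
        rw [hF2 x hx1.le hlt, ← toCirc_sub_one (2*l1 + l2 - x + τ),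
          hF1 (2*l1 + l2 - x + τ - 1) (by linarith) (by linarith)]
        congr 1; linarith
      rw [hcomp]
      refine ⟨⟨x + l3, ⟨by linarith, by linarith⟩, rfl⟩, 0, ?_⟩
      rw [rep_toCirc (by linarith) (by linarith)]
      push_cast; ring
    · have hcomp : FF l1 l2 τ (FF l1 l2 τ (toCirc x)) = toCirc (x - l2) := by
        rw [hF3 x hgt.le hx2, ← toCirc_sub_one (l1 + l2 + 1 - x + τ),
          hF1 (l1 + l2 + 1 - x + τ - 1) (by linarith) (by linarith)]
        congr 1; linarith
      rw [hcomp]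
      refine ⟨⟨x - l2, ⟨by linarith, by linarith⟩, rfl⟩, 1, ?_⟩
      rw [rep_toCirc (by linarith) (by linarith)]
      push_cast; linarith
  · -- part (iii)
    have hfin : (toCirc '' {0, l1 + τ - 1, τ - l2, τ, l1, l1 + l2}).Finite :=
      (((((Set.finite_singleton (l1 + l2)).insert l1).insert τ).insert
        (τ - l2)).insert (l1 + τ - 1)).insert 0 |>.image toCirc
    apply Set.Finite.subset hfin
    rintro x ⟨hnot, hfix⟩
    set r := rep x with hrdef
    have hr0 : 0 ≤ r := (rep_mem x).1
    have hr1 : r < 1 := (rep_mem x).2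
    have hxr : toCirc r = x := toCirc_rep x
    rw [← hxr] at hfix
    have key : ∀ s : ℝ, 0 ≤ s → s < 1 →
        FF l1 l2 τ (FF l1 l2 τ (toCirc r)) = toCirc s → s = r := by
      intro s hs0 hs1 h
      have : toCirc s = toCirc r := h.symm.trans hfix
      have := congrArg rep this
      rwa [rep_toCirc hs0 hs1, rep_toCirc hr0 hr1] at this
    refine ⟨r, ?_, hxr⟩
    by_contra hS
    simp only [Set.mem_insert_iff, Set.mem_singleton_iff, not_or] at hS
    obtain ⟨hne0, hneA, hneB, hneτ, hnel1, hnel12⟩ := hS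
    have hr0' : 0 < r := lt_of_le_of_ne hr0 (Ne.symm hne0)
    rcases lt_trichotomy r (l1 + τ - 1) with hc | hc | hc
    · exact hnot (Or.inl ⟨r, ⟨hr0', hc⟩, hxr⟩)
    · exact hneA hc
    rcases lt_trichotomy r τ with hd | hd | hd
    · -- r ∈ (l1+τ-1, τ)
      rcases lt_trichotomy r (τ - l2) with he | he | he
      · have hcomp : FF l1 l2 τ (FF l1 l2 τ (toCirc r)) = toCirc (r + l2) := by
          rw [hF1 r hr0 (by linarith), hF3 (l1 - r + τ) (by linarith) (by linarith),
            show l1 + l2 + 1 - (l1 - r + τ) + τ = (r + l2) + 1 by ring,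
            ← toCirc_sub_one (r + l2 + 1)]
          congr 1; ring
        have := key (r + l2) (by linarith) (by linarith) hcomp
        linarith
      · exact hneB he
      · have hcomp : FF l1 l2 τ (FF l1 l2 τ (toCirc r)) = toCirc (l1 + l2 + r) := by
          rw [hF1 r hr0 (by linarith), hF2 (l1 - r + τ) (by linarith) (by linarith)]
          congr 1; ring
        by_cases hlt : l1 + l2 + r < 1
        · have := key (l1 + l2 + r) (by linarith) hlt hcomp
          linarith
        · push_neg at hlt
          have hcomp' : FF l1 l2 τ (FF l1 l2 τ (toCirc r)) = toCirc (l1 + l2 + r - 1) :=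
            hcomp.trans (toCirc_sub_one (l1 + l2 + r)).symm
          have := key (l1 + l2 + r - 1) (by linarith) (by linarith) hcomp'
          linarith
    · exact hneτ hd
    rcases lt_trichotomy r l1 with hf | hf | hf
    · exact hnot (Or.inr ⟨r, ⟨hd, hf⟩, hxr⟩)
    · exact hnel1 hf
    rcases lt_trichotomy r (l1 + l2) with hg | hg | hg
    · -- r ∈ (l1, l1+l2)
      have hcomp : FF l1 l2 τ (FF l1 l2 τ (toCirc r)) = toCirc (r + l3) := by
        rw [hF2 r hf.le hg, ← toCirc_sub_one (2*l1 + l2 - r + τ),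
          hF1 (2*l1 + l2 - r + τ - 1) (by linarith) (by linarith)]
        congr 1; linarith
      have := key (r + l3) (by linarith) (by linarith) hcomp
      linarith
    · exact hnel12 hg
    · -- r ∈ (l1+l2, 1)
      have hcomp : FF l1 l2 τ (FF l1 l2 τ (toCirc r)) = toCirc (r - l2) := by
        rw [hF3 r hg.le hr1, ← toCirc_sub_one (l1 + l2 + 1 - r + τ),
          hF1 (l1 + l2 + 1 - r + τ - 1) (by linarith) (by linarith)]
        congr 1; linarith
      have := key (r - l2) (by linarith) (by linarith) hcomp
      linarith

end
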